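/- Existence of b-maximal extensions: Let M be an RB-CGS#, A a nonempty coalition, F_A a strategy for A, b a resource bound, and s a state. Then every computation from s that is consistent with F_A and b-consistent is a prefix of some computation in out(s, F_A, b); in particular, out(s, F_A, b) is nonempty (every computation consistent with the strategy eventually runs out of the diminishing resource or reaches a state with no defined successor). -/

import Mathlib

/-- A resource-bounded concurrent game structure with a diminishing resource (RB-CGS#). -/
structure RBCGS (Agt S Act Res : Type) where
  /-- available actions for each agent in each state -/
  d : S → Agt → Set Act
  d_ne : ∀ s a, (d s a).Nonempty
  /-- cost function (negative = consumption, positive = production) -/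
  cost : S → Act → Res → ℤ
  /-- the distinguished diminishing resource (the "first" resource) -/
  res1 : Res
  /-- every available action consumes at least one unit of the diminishing resource -/
  cost_first : ∀ s (a : Agt) (α : Act), α ∈ d s a → cost s α res1 ≤ -1
  /-- partial transition function on joint actions -/
  tr : S → (Agt → Act) → Option S

namespace RBCGS

variable {Agt S Act Res : Type}

/-- consumption of resource ρ by action α at state s : `|min(0, c(s,α))|`. -/
def consR (M : RBCGS Agt S Act Res) (s : S) (α : Act) (ρ : Res) : ℕ :=
  (min 0 (M.cost s α ρ)).natAbs

/-- production of resource ρ by action α at state s : `max(0, c(s,α))`. -/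
def prodR (M : RBCGS Agt S Act Res) (s : S) (α : Act) (ρ : Res) : ℕ :=
  (max 0 (M.cost s α ρ)).toNat

/-- σ is a (projection of a) joint action for coalition A at state s. -/
def JointAt (M : RBCGS Agt S Act Res) (A : Set Agt) (s : S) (σ : Agt → Act) : Prop :=
  ∀ a ∈ A, σ a ∈ M.d s a

/-- outcomes of a joint action of coalition A at state s. -/
def outA (M : RBCGS Agt S Act Res) (A : Set Agt) (s : S) (σA : Agt → Act) : Set S :=
  { s' | ∃ σ : Agt → Act, (∀ a, σ a ∈ M.d s a) ∧ (∀ a ∈ A, σ a = σA a) ∧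
    M.tr s σ = some s' }

variable [Inhabited S]

/-- F is a strategy for coalition A : on every nonempty history it prescribes a joint
action available to A at the last state of the history. -/
def Strategy (M : RBCGS Agt S Act Res) (A : Set Agt) (F : List S → Agt → Act) : Prop :=
  ∀ l : List S, l ≠ [] → M.JointAt A (l.getD (l.length - 1) default) (F l)

/-- l is a (finite, nonempty) computation starting at s consistent with strategy F
(the computation `λ[1..k]` is represented 0-based as `l[0..k-1]`). -/
def ConsistentFrom (M : RBCGS Agt S Act Res) (A : Set Agt) (F : List S → Agt → Act)
    (s : S) (l : List S) : Prop :=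
  l ≠ [] ∧ l.getD 0 default = s ∧
    ∀ i, i + 1 < l.length →
      l.getD (i + 1) default ∈ M.outA A (l.getD i default) (F (l.take (i + 1)))

/-- `eAvail M F b l i a ρ` is the amount `e_a(λ[i+1])` of resource ρ available to a
after i steps of l under strategy F with initial bound b. -/
def eAvail (M : RBCGS Agt S Act Res) (F : List S → Agt → Act)
    (b : Agt → Res → ℕ) (l : List S) : ℕ → Agt → Res → ℤ
  | 0 => fun a ρ => (b a ρ : ℤ)
  | i + 1 => fun a ρ =>
      eAvail M F b l i a ρ
        - (M.consR (l.getD i default) (F (l.take (i + 1)) a) ρ : ℤ)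
        + (M.prodR (l.getD i default) (F (l.take (i + 1)) a) ρ : ℤ)

/-- l is b-consistent with strategy F for coalition A. -/
def BConsistent (M : RBCGS Agt S Act Res) (A : Set Agt) (F : List S → Agt → Act)
    (b : Agt → Res → ℕ) (l : List S) : Prop :=
  ∀ a ∈ A, ∀ i, i + 1 < l.length → ∀ ρ,
    (M.consR (l.getD i default) (F (l.take (i + 1)) a) ρ : ℤ) ≤ M.eAvail F b l i a ρ

/-- l is a b-maximal computation from s consistent with F. -/
def BMaximal (M : RBCGS Agt S Act Res) (A : Set Agt) (F : List S → Agt → Act)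
    (b : Agt → Res → ℕ) (s : S) (l : List S) : Prop :=
  M.ConsistentFrom A F s l ∧ M.BConsistent A F b l ∧
    ¬ ∃ l' : List S, l <+: l' ∧ l.length < l'.length ∧
        M.ConsistentFrom A F s l' ∧ M.BConsistent A F b l'

/-- `out(s, F_A, b)` : the set of b-maximal computations from s consistent with F. -/
def outSet (M : RBCGS Agt S Act Res) (A : Set Agt) (F : List S → Agt → Act)
    (b : Agt → Res → ℕ) (s : S) : Set (List S) :=
  { l | M.BMaximal A F b s l }

end RBCGS

/-!
Every action consumes at least one unit of the diminishing resource and produces none of it, so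
along a `b`-consistent computation an agent `a` of the coalition loses one unit per step and the
computation has at most `b a res1 + 1` states. Among the `b`-consistent extensions of a computation
one of greatest length is therefore `b`-maximal.
-/

theorem List.exists_prefix_maximal_of_length_le {α : Type*} (P : List α → Prop) {N : ℕ}
    (hN : ∀ l, P l → l.length ≤ N) {l : List α} (hl : P l) :
    ∃ l', P l' ∧ l <+: l' ∧ ¬ ∃ l'', l' <+: l'' ∧ l'.length < l''.length ∧ P l'' := by
  classical
  set m := Nat.findGreatest (fun n => ∃ l', P l' ∧ l <+: l' ∧ l'.length = n) N
  obtain ⟨l', hl', hpre, hlen⟩ : ∃ l', P l' ∧ l <+: l' ∧ l'.length = m :=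
    Nat.findGreatest_spec (P := fun n => ∃ l', P l' ∧ l <+: l' ∧ l'.length = n) (hN l hl)
      ⟨l, hl, List.prefix_refl l, rfl⟩
  refine ⟨l', hl', hpre, ?_⟩
  rintro ⟨l'', hpre', hlt, hl''⟩
  have : l''.length ≤ m :=
    Nat.le_findGreatest (hN l'' hl'') ⟨l'', hl'', hpre.trans hpre', rfl⟩
  omega

namespace RBCGS

variable {Agt S Act Res : Type} (M : RBCGS Agt S Act Res)

theorem one_le_consR_res1 {s : S} {a : Agt} {α : Act} (hα : α ∈ M.d s a) :
    1 ≤ M.consR s α M.res1 := by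
  have := M.cost_first s a α hα
  unfold consR
  omega

theorem prodR_res1_eq_zero {s : S} {a : Agt} {α : Act} (hα : α ∈ M.d s a) :
    M.prodR s α M.res1 = 0 := by
  have := M.cost_first s a α hα
  unfold prodR
  omega

variable [Inhabited S] {M} {A : Set Agt} {F : List S → Agt → Act}

theorem Strategy.mem_d_take (hF : M.Strategy A F) {a : Agt} (ha : a ∈ A) {l : List S} {i : ℕ}
    (hi : i < l.length) : F (l.take (i + 1)) a ∈ M.d (l.getD i default) a := by
  have hlen : (l.take (i + 1)).length = i + 1 := by simp only [List.length_take]; omega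
  have hne : l.take (i + 1) ≠ [] := List.ne_nil_of_length_pos (by omega)
  have hlast : (l.take (i + 1)).getD (i + 1 - 1) default = l.getD i default := by
    simp [List.getD_eq_getElem?_getD]
  simpa only [hlen, hlast] using hF _ hne a ha

theorem Strategy.eAvail_res1_le (hF : M.Strategy A F) (b : Agt → Res → ℕ) {a : Agt}
    (ha : a ∈ A) (l : List S) {i : ℕ} (hi : i ≤ l.length) :
    M.eAvail F b l i a M.res1 ≤ b a M.res1 - i := by
  induction i with
  | zero => simp [eAvail]
  | succ i ih =>
    have hα := hF.mem_d_take ha (show i < l.length by omega)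
    have hcons := M.one_le_consR_res1 hα
    simp only [eAvail, M.prodR_res1_eq_zero hα]
    push_cast
    linarith [ih (by omega)]

theorem Strategy.length_le_of_bConsistent (hF : M.Strategy A F) {b : Agt → Res → ℕ} {a : Agt}
    (ha : a ∈ A) {l : List S} (hl : M.BConsistent A F b l) : l.length ≤ b a M.res1 + 1 := by
  by_contra! h
  have hfeasible := hl a ha (b a M.res1) (by omega) M.res1
  have hcons := M.one_le_consR_res1 (hF.mem_d_take ha (show b a M.res1 < l.length by omega))
  have hleft := hF.eAvail_res1_le b ha l (show b a M.res1 ≤ l.length by omega)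
  omega

theorem consistentFrom_singleton (s : S) : M.ConsistentFrom A F s [s] :=
  ⟨List.cons_ne_nil s [], rfl, fun i hi => by simp at hi⟩

theorem bConsistent_singleton (b : Agt → Res → ℕ) (s : S) : M.BConsistent A F b [s] :=
  fun _ _ i hi => by simp at hi

end RBCGS

/-- Existence of b-maximal extensions: every computation from s consistent
with F and b-consistent is a prefix of some member of out(s, F_A, b); in particular
out(s, F_A, b) is nonempty. -/
theorem exists_bmaximal_extension {Agt S Act Res : Type} [Inhabited S]
    (M : RBCGS Agt S Act Res) (A : Set Agt) (hA : A.Nonempty)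
    (F : List S → Agt → Act) (hF : M.Strategy A F)
    (b : Agt → Res → ℕ) (s : S) :
    (∀ l : List S, M.ConsistentFrom A F s l → M.BConsistent A F b l →
        ∃ l' ∈ M.outSet A F b s, l <+: l') ∧
      (M.outSet A F b s).Nonempty := by
  obtain ⟨a, ha⟩ := hA
  have extend : ∀ l : List S, M.ConsistentFrom A F s l → M.BConsistent A F b l →
      ∃ l' ∈ M.outSet A F b s, l <+: l' := by
    intro l hc hb
    obtain ⟨l', ⟨hc', hb'⟩, hpre, hmax⟩ :=
      List.exists_prefix_maximal_of_length_le
        (fun l => M.ConsistentFrom A F s l ∧ M.BConsistent A F b l)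
        (fun _ hl => hF.length_le_of_bConsistent ha hl.2) ⟨hc, hb⟩
    exact ⟨l', ⟨hc', hb', hmax⟩, hpre⟩
  obtain ⟨l', hl', -⟩ :=
    extend [s] (RBCGS.consistentFrom_singleton s) (RBCGS.bConsistent_singleton b s)
  exact ⟨extend, l', hl'⟩
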